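/- Odd virtual knots do not admit non-trivial cosmetic crossing changes: if K_+ and K_− are virtual knot diagrams all of whose crossings are odd, differing only by a crossing change at one crossing, then the Odd Wriggle Polynomials satisfy Ŵ_{K_+}(t) − Ŵ_{K_−}(t) = t^k + t^{−k} ≠ 0 (where k = W(L_{c_1}) for the changed crossing c₁), so K_+ and K_− are not virtually isotopic. -/

import Mathlib

open scoped Classical
open LaurentPolynomial

noncomputable section

/-- A Gauss diagram for an oriented virtual knot with `n` classical crossings: a circle
with `2 * n` marked points (positions in `ZMod (2*n)`, traversed in cyclic order), and for
each crossing `c` a signed oriented chord, recorded by the position `over c` of its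
over-passage (head), the position `under c` of its under-passage (tail), and its sign. -/
structure GaussDiagram (n : ℕ) where
  overPos : Fin n → ZMod (2 * n)
  under : Fin n → ZMod (2 * n)
  sign : Fin n → ℤ
  endpoints_inj : Function.Injective
    (fun p : Fin n × Bool => if p.2 then overPos p.1 else under p.1)
  sign_pm : ∀ c, sign c = 1 ∨ sign c = -1

namespace GaussDiagram

/-- `x` lies strictly inside the arc running forward (in the orientation of the circle)
from `a` to `b`. -/
def Between {m : ℕ} (a b x : ZMod m) : Prop :=
  (x - a).val < (b - a).val ∧ x ≠ a

variable {n : ℕ}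

/-- After orientedly smoothing the crossing `c`, the first component of the resulting
2-component link `L_c` (the component carrying the dot placed on the incoming understrand
of `c`) is the arc running forward from the over-passage of `c` to its under-passage. -/
def onComp1 (G : GaussDiagram n) (c : Fin n) (x : ZMod (2 * n)) : Prop :=
  Between (G.overPos c) (G.under c) x

/-- The chords `c` and `d` intersect (interleave): exactly one endpoint of `d` lies in the
arc cut out by `c`; equivalently `d` becomes a linking crossing of the smoothed link `L_c`. -/
def Crosses (G : GaussDiagram n) (c d : Fin n) : Prop :=
  Xor' (G.onComp1 c (G.overPos d)) (G.onComp1 c (G.under d))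

/-- `d ∈ P_c`: `d` intersects `c` positively (traveling along the first component of `L_c`
one passes *over* `d`). -/
def PosAt (G : GaussDiagram n) (c d : Fin n) : Prop :=
  G.Crosses c d ∧ G.onComp1 c (G.overPos d)

/-- `d ∈ N_c`: `d` intersects `c` negatively (traveling along the first component of `L_c`
one passes *under* `d`). -/
def NegAt (G : GaussDiagram n) (c d : Fin n) : Prop :=
  G.Crosses c d ∧ G.onComp1 c (G.under d)

/-- The wriggle number `W(L_c) = lk_O(L_c) - lk_U(L_c)` of the ordered 2-component link
obtained by the oriented smoothing at `c`. -/
def wriggle (G : GaussDiagram n) (c : Fin n) : ℤ :=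
  (∑ d ∈ Finset.univ.filter (fun d => G.PosAt c d), G.sign d)
    - ∑ d ∈ Finset.univ.filter (fun d => G.NegAt c d), G.sign d

/-- The writhe: the sum of the signs of all crossings. -/
def writhe (G : GaussDiagram n) : ℤ := ∑ c, G.sign c

/-- The Wriggle Polynomial `W_K(t) = Σ_c sign(c) · t^{W(L_c)} - writhe(K)`, as a Laurent
polynomial over `ℤ`. -/
def wrigglePoly (G : GaussDiagram n) : LaurentPolynomial ℤ :=
  (∑ c, C (G.sign c) * T (G.wriggle c)) - C G.writhe

end GaussDiagram

namespace GaussDiagram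

variable {n : ℕ}

/-- `G'` is obtained from `G` by a crossing change at the crossing `c₁`: the over/under
data at `c₁` is exchanged (the chord is reversed) and its sign is switched, while all
other crossings are unchanged. -/
def IsCrossingChange (G G' : GaussDiagram n) (c₁ : Fin n) : Prop :=
  G'.overPos = Function.update G.overPos c₁ (G.under c₁) ∧
  G'.under = Function.update G.under c₁ (G.overPos c₁) ∧
  G'.sign = Function.update G.sign c₁ (-(G.sign c₁))

/-- A crossing is odd iff the two occurrences of the crossing in the Gauss code are
separated by an odd number of letters, i.e. the forward distance between the two endpoints
of its chord is even. -/
def OddCrossing (G : GaussDiagram n) (c : Fin n) : Prop :=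
  Even ((G.under c - G.overPos c).val)

end GaussDiagram

namespace GaussDiagram

/-- The Odd Wriggle Polynomial `Ŵ_K(t) = Σ_{c odd} sign(c) · t^{W(L_c)}`. -/
def oddWrigglePoly {n : ℕ} (G : GaussDiagram n) : LaurentPolynomial ℤ :=
  ∑ c ∈ Finset.univ.filter (fun c => G.OddCrossing c), C (G.sign c) * T (G.wriggle c)

end GaussDiagram

open GaussDiagram

/-! A crossing change at `c₁` reverses the chord `c₁` and negates its sign. Reversing the chord
replaces the first component of `L_{c₁}` by the complementary arc, so every chord linking it
switches between `P_{c₁}` and `N_{c₁}`, and `W(L_{c₁})` is negated. In `L_c` for `c ≠ c₁` it only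
swaps the over/under roles of `c₁`, which moves `c₁` between `P_c` and `N_c`; together with the
sign change of `c₁` this leaves `W(L_c)` unchanged. The distance `k` between the ends of the
reversed chord becomes `2n - k`, of the same parity, so oddness is preserved, and in
`Ŵ_{K₊} - Ŵ_{K₋}` only the term of `c₁` survives: `t^k - (-t^{-k})`. -/

theorem ZMod.even_val_neg {m : ℕ} (hm : Even m) (x : ZMod m) :
    Even (-x).val ↔ Even x.val := by
  rcases m.eq_zero_or_pos with rfl | hpos
  · rw [ZMod.val_neg']
  · have : NeZero m := ⟨hpos.ne'⟩
    rcases eq_or_ne x 0 with rfl | hx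
    · simp
    · rw [ZMod.neg_val, if_neg hx, Nat.even_sub (ZMod.val_lt x).le]
      simp [hm]

theorem LaurentPolynomial.T_add_T_neg_ne_zero {R : Type*} [Semiring R] [NeZero (2 : R)]
    (k : ℤ) : (T k + T (-k) : R[T;T⁻¹]) ≠ 0 := by
  intro h
  have hk : (T k + T (-k) : R[T;T⁻¹]).coeff k = 0 := by rw [h]; rfl
  rw [AddMonoidAlgebra.coeff_add, Finsupp.add_apply, T_apply, T_apply, if_pos rfl] at hk
  refine two_ne_zero (α := R) ?_
  split_ifs at hk
  · rwa [one_add_one_eq_two] at hk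
  · rw [add_zero] at hk
    rw [← one_add_one_eq_two, hk, add_zero]

namespace GaussDiagram

theorem between_swap_iff {m : ℕ} [NeZero m] {a b x : ZMod m} (hab : a ≠ b) (hxa : x ≠ a)
    (hxb : x ≠ b) : Between b a x ↔ ¬ Between a b x := by
  set u := (x - a).val
  set s := (b - a).val
  have hu0 : 0 < u := ZMod.val_pos.2 (sub_ne_zero.2 hxa)
  have hum : u < m := ZMod.val_lt _
  have hsm : s < m := ZMod.val_lt _
  have hus : u ≠ s := fun h => hxb (sub_left_inj.mp (ZMod.val_injective m h))
  have hba : (a - b).val = m - s := by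
    rw [← neg_sub, ZMod.neg_val, if_neg (sub_ne_zero.2 hab.symm)]
  have hxb' : (x - b).val = (u + (m - s)) % m := by
    rw [← sub_add_sub_cancel x a b, ZMod.val_add, hba]
  simp only [Between, ne_eq, hxa, hxb, not_false_iff, and_true, hxb', hba]
  rcases lt_or_gt_of_ne hus with h | h
  · rw [Nat.mod_eq_of_lt (by omega)]
    omega
  · rw [show u + (m - s) = (u - s) + m by omega, Nat.add_mod_right, Nat.mod_eq_of_lt (by omega)]
    omega

variable {n : ℕ}

theorem overPos_ne_under (G : GaussDiagram n) (c d : Fin n) : G.overPos c ≠ G.under d := by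
  intro h
  simpa using congrArg Prod.snd (G.endpoints_inj (a₁ := (c, true)) (a₂ := (d, false)) h)

theorem overPos_injective (G : GaussDiagram n) : Function.Injective G.overPos := fun c d h => by
  simpa using congrArg Prod.fst (G.endpoints_inj (a₁ := (c, true)) (a₂ := (d, true)) h)

theorem under_injective (G : GaussDiagram n) : Function.Injective G.under := fun c d h => by
  simpa using congrArg Prod.fst (G.endpoints_inj (a₁ := (c, false)) (a₂ := (d, false)) h)

theorem crosses_iff (G : GaussDiagram n) (c d : Fin n) :
    G.Crosses c d ↔ G.onComp1 c (G.overPos d) ∧ ¬ G.onComp1 c (G.under d) ∨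
      G.onComp1 c (G.under d) ∧ ¬ G.onComp1 c (G.overPos d) :=
  Iff.rfl

theorem not_crosses_self (G : GaussDiagram n) (c : Fin n) : ¬ G.Crosses c c := by
  have hover : ¬ G.onComp1 c (G.overPos c) := fun h => h.2 rfl
  have hunder : ¬ G.onComp1 c (G.under c) := fun h => lt_irrefl _ h.1
  rintro (⟨h, -⟩ | ⟨h, -⟩)
  exacts [hover h, hunder h]

def overUnderSign (G : GaussDiagram n) (c d : Fin n) : ℤ :=
  (if G.PosAt c d then 1 else 0) - (if G.NegAt c d then 1 else 0)

theorem wriggle_eq_sum (G : GaussDiagram n) (c : Fin n) :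
    G.wriggle c = ∑ d, G.sign d * G.overUnderSign c d := by
  rw [wriggle, Finset.sum_filter, Finset.sum_filter, ← Finset.sum_sub_distrib]
  refine Finset.sum_congr rfl fun d _ => ?_
  unfold overUnderSign
  split_ifs <;> ring

theorem overUnderSign_self (G : GaussDiagram n) (c : Fin n) : G.overUnderSign c c = 0 := by
  have hpos : ¬ G.PosAt c c := fun h => G.not_crosses_self c h.1
  have hneg : ¬ G.NegAt c c := fun h => G.not_crosses_self c h.1
  simp [overUnderSign, hpos, hneg]

theorem overUnderSign_eq_neg {G G' : GaussDiagram n} {c d : Fin n}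
    (hpos : G'.PosAt c d ↔ G.NegAt c d) (hneg : G'.NegAt c d ↔ G.PosAt c d) :
    G'.overUnderSign c d = -G.overUnderSign c d := by
  simp only [overUnderSign, hpos, hneg]
  ring

namespace IsCrossingChange

variable {G G' : GaussDiagram n} {c₁ c d : Fin n} {x : ZMod (2 * n)}
  (h : IsCrossingChange G G' c₁)
include h

theorem overPos_self : G'.overPos c₁ = G.under c₁ := by simp [h.1]

theorem under_self : G'.under c₁ = G.overPos c₁ := by simp [h.2.1]

theorem sign_self : G'.sign c₁ = -G.sign c₁ := by simp [h.2.2]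

theorem overPos_of_ne (hc : c ≠ c₁) : G'.overPos c = G.overPos c := by simp [h.1, hc]

theorem under_of_ne (hc : c ≠ c₁) : G'.under c = G.under c := by simp [h.2.1, hc]

theorem sign_of_ne (hc : c ≠ c₁) : G'.sign c = G.sign c := by simp [h.2.2, hc]

theorem onComp1_of_ne (hc : c ≠ c₁) : G'.onComp1 c = G.onComp1 c := by
  ext y
  rw [onComp1, onComp1, h.overPos_of_ne hc, h.under_of_ne hc]

theorem onComp1_self_iff (hxo : x ≠ G.overPos c₁) (hxu : x ≠ G.under c₁) :
    G'.onComp1 c₁ x ↔ ¬ G.onComp1 c₁ x := by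
  have : NeZero (2 * n) := ⟨by have := c₁.pos; omega⟩
  rw [onComp1, onComp1, h.overPos_self, h.under_self]
  exact between_swap_iff (G.overPos_ne_under c₁ c₁) hxo hxu

theorem overUnderSign_of_ne (hc : c ≠ c₁) (hd : d ≠ c₁) :
    G'.overUnderSign c d = G.overUnderSign c d := by
  have hpos : G'.PosAt c d ↔ G.PosAt c d := by
    simp only [PosAt, crosses_iff, h.onComp1_of_ne hc, h.overPos_of_ne hd, h.under_of_ne hd]
  have hneg : G'.NegAt c d ↔ G.NegAt c d := by
    simp only [NegAt, crosses_iff, h.onComp1_of_ne hc, h.overPos_of_ne hd, h.under_of_ne hd]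
  simp only [overUnderSign, hpos, hneg]

theorem overUnderSign_right (hc : c ≠ c₁) :
    G'.overUnderSign c c₁ = -G.overUnderSign c c₁ := by
  apply overUnderSign_eq_neg <;>
  · simp only [PosAt, NegAt, crosses_iff, h.onComp1_of_ne hc, h.overPos_self, h.under_self]
    tauto

theorem overUnderSign_left (hd : d ≠ c₁) :
    G'.overUnderSign c₁ d = -G.overUnderSign c₁ d := by
  have hover := h.onComp1_self_iff (G.overPos_injective.ne hd) (G.overPos_ne_under d c₁)
  have hunder := h.onComp1_self_iff (G.overPos_ne_under c₁ d).symm (G.under_injective.ne hd)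
  apply overUnderSign_eq_neg <;>
  · simp only [PosAt, NegAt, crosses_iff, h.overPos_of_ne hd, h.under_of_ne hd, hover, hunder]
    tauto

theorem wriggle_of_ne (hc : c ≠ c₁) : G'.wriggle c = G.wriggle c := by
  rw [wriggle_eq_sum, wriggle_eq_sum]
  refine Finset.sum_congr rfl fun d _ => ?_
  rcases eq_or_ne d c₁ with rfl | hd
  · rw [h.sign_self, h.overUnderSign_right hc, neg_mul_neg]
  · rw [h.sign_of_ne hd, h.overUnderSign_of_ne hc hd]

theorem wriggle_self : G'.wriggle c₁ = -G.wriggle c₁ := by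
  rw [wriggle_eq_sum, wriggle_eq_sum, ← Finset.sum_neg_distrib]
  refine Finset.sum_congr rfl fun d _ => ?_
  rcases eq_or_ne d c₁ with rfl | hd
  · simp [overUnderSign_self]
  · rw [h.sign_of_ne hd, h.overUnderSign_left hd, mul_neg]

theorem oddCrossing_iff : G'.OddCrossing c ↔ G.OddCrossing c := by
  unfold OddCrossing
  rcases eq_or_ne c c₁ with rfl | hc
  · rw [h.overPos_self, h.under_self, ← neg_sub]
    exact ZMod.even_val_neg (even_two_mul n) _
  · rw [h.overPos_of_ne hc, h.under_of_ne hc]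

theorem oddWrigglePoly_sub (hodd : G.OddCrossing c₁) :
    G.oddWrigglePoly - G'.oddWrigglePoly =
      C (G.sign c₁) * (T (G.wriggle c₁) + T (-G.wriggle c₁)) := by
  rw [oddWrigglePoly, oddWrigglePoly, Finset.sum_filter, Finset.sum_filter,
    ← Finset.sum_sub_distrib, Finset.sum_eq_single c₁]
  · rw [if_pos hodd, if_pos (h.oddCrossing_iff.2 hodd), h.sign_self, h.wriggle_self, map_neg]
    ring
  · intro c _ hc
    rw [h.oddCrossing_iff, h.sign_of_ne hc, h.wriggle_of_ne hc, sub_self]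
  · exact fun hc => absurd (Finset.mem_univ c₁) hc

end IsCrossingChange

end GaussDiagram

/-- Odd virtual knots do not admit non-trivial cosmetic crossing changes.
If `K₊` and `K₋` are virtual knot diagrams all of whose crossings are odd, differing only
by a crossing change at one crossing `c₁` (at which `K₊` is positive), then letting
`k = W(L_{c₁})`, the Odd Wriggle Polynomials satisfy
`Ŵ_{K₊}(t) - Ŵ_{K₋}(t) = t^k + t^{-k} ≠ 0`; since the Odd Wriggle Polynomial is an
invariant of virtual isotopy, `K₊` and `K₋` are not virtually isotopic. -/
theorem odd_knots_no_cosmetic_crossing_change {n : ℕ} (G G' : GaussDiagram n)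
    (c₁ : Fin n)
    (hodd : ∀ c : Fin n, G.OddCrossing c)
    (hcc : GaussDiagram.IsCrossingChange G G' c₁)
    (hpos : G.sign c₁ = 1)
    (virtIsotopic : (Σ m, GaussDiagram m) → (Σ m, GaussDiagram m) → Prop)
    (hinv : ∀ A B : Σ m, GaussDiagram m,
      virtIsotopic A B → A.2.oddWrigglePoly = B.2.oddWrigglePoly) :
    G.oddWrigglePoly - G'.oddWrigglePoly = T (G.wriggle c₁) + T (-(G.wriggle c₁)) ∧
    G.oddWrigglePoly - G'.oddWrigglePoly ≠ 0 ∧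
    ¬ virtIsotopic ⟨n, G⟩ ⟨n, G'⟩ := by
  have hdiff := hcc.oddWrigglePoly_sub (hodd c₁)
  rw [hpos, map_one, one_mul] at hdiff
  have hne : T (G.wriggle c₁) + T (-G.wriggle c₁) ≠ (0 : ℤ[T;T⁻¹]) :=
    T_add_T_neg_ne_zero _
  refine ⟨hdiff, hdiff ▸ hne, fun hiso => hne ?_⟩
  rw [← hdiff, hinv _ _ hiso, sub_self]
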